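/- arXiv:1301.2537 — 4 statements merged into one kernel-verified Lean document; each statement's English description precedes it below -/
import Mathlib

section
/- For every bistochastic n×n matrix P, there exists an n×n matrix V with entries v_i^j ∈ ℝ^n such that V defines an isometry ℝ^n → ℝ^{n²} (i.e. ∑_{i=1}^n ⟨v_j^i, v_k^i⟩ = δ(j,k)) and ‖v_i^j‖² = p_i^j for all i, j. In other words, every bistochastic matrix is n-orthostochastic: os(ℝ, n, n) = B_n. -/
open scoped RealInnerProductSpace

/-- A real `n × n` matrix is bistochastic. -/
def Bistochastic {n : ℕ} (p : Matrix (Fin n) (Fin n) ℝ) : Prop :=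
  (∀ i j, 0 ≤ p i j) ∧ (∀ i, ∑ j, p i j = 1) ∧ (∀ j, ∑ i, p i j = 1)

/-- every bistochastic `n × n` matrix `P` arises as the matrix of
squared norms of an isometry `ℝⁿ → ℝ^{n·n}` given by an `n × n` matrix of
vectors in `ℝⁿ`, i.e. `os(ℝ, n, n) = B_n`. -/
theorem bistochastic_is_n_orthostochastic (n : ℕ)
    (p : Matrix (Fin n) (Fin n) ℝ) (hp : Bistochastic p) :
    ∃ v : Fin n → Fin n → EuclideanSpace ℝ (Fin n),
      (∀ j k : Fin n, ∑ i : Fin n, ⟪v j i, v k i⟫ = if j = k then 1 else 0) ∧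
      (∀ i j : Fin n, ‖v i j‖ ^ 2 = p i j) := by
  obtain ⟨hnn, hrow, hcol⟩ := hp
  refine ⟨fun i j => Real.sqrt (p i j) • EuclideanSpace.single i (1 : ℝ), ?_, ?_⟩
  · intro j k
    by_cases h : j = k
    · subst h
      simp only [if_true, real_inner_smul_left, real_inner_smul_right,
        EuclideanSpace.inner_single_left, EuclideanSpace.single_apply]
      simp only [if_pos rfl, mul_one, starRingEnd_apply, star_trivial]
      have : ∀ i, Real.sqrt (p j i) * Real.sqrt (p j i) = p j i := fun i =>
        Real.mul_self_sqrt (hnn j i)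
      simp_rw [this]
      exact hrow j
    · simp only [if_neg h, real_inner_smul_left, real_inner_smul_right,
        EuclideanSpace.inner_single_left, EuclideanSpace.single_apply, if_neg h,
        starRingEnd_apply, star_trivial, mul_zero, zero_mul, Finset.sum_const_zero]
  · intro i j
    rw [norm_smul]
    simp only [Real.norm_eq_abs, abs_of_nonneg (Real.sqrt_nonneg _),
      EuclideanSpace.norm_single, norm_one, mul_one]
    exact Real.sq_sqrt (hnn i j)
end

section
/- Let n be an odd positive integer and let ξ_1, …, ξ_n be positive real numbers satisfying, for all 1 ≤ i ≤ n (cyclic indices), ξ_i + ξ_{i+3} + ξ_{i+5} + ⋯ + ξ_{i+n−2} ≤ ξ_{i+1} + ξ_{i+2} + ξ_{i+4} + ⋯ + ξ_{i+n−1}. Then there exists a real skew-symmetric n×n matrix A = [a_i^j] such that ∑_{i=1}^n (a_i^j)² = ξ_j for all 1 ≤ j ≤ n. -/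
/-!
Let `S c = ∑_{t<n} (-1)^t ξ (c + t)`. Because `n` is odd, `S c + S (c + 1) = 2 ξ c`, and the
two sides of the cyclic inequality at `i` differ by `S i - 2 ξ i + 2 ξ (i + 1) = S (i + 2)`, so
the hypothesis says exactly that `S ≥ 0`. The skew-symmetric matrix supported on the two cyclic
off-diagonals whose column `j` has entries `√(S j / 2)` and `-√(S (j + 1) / 2)` then has column
square sums `(S j + S (j + 1)) / 2 = ξ j`.
-/

/-- The cyclic inequalities
`ξ_i + ξ_{i+3} + ξ_{i+5} + ⋯ + ξ_{i+n−2} ≤ ξ_{i+1} + ξ_{i+2} + ξ_{i+4} + ⋯ + ξ_{i+n−1}`: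
the left sum runs over offsets `{0, 3, 5, …, n−2}`, the right over
`{1, 2, 4, …, n−1}`. -/
def CycIneq (n : ℕ) (ξ : ZMod n → ℝ) : Prop :=
  ∀ i : ZMod n,
    ∑ t ∈ (Finset.range n).filter (fun t => t = 0 ∨ (Odd t ∧ t ≠ 1)),
        ξ (i + (t : ZMod n)) ≤
    ∑ t ∈ (Finset.range n).filter (fun t => t = 1 ∨ (Even t ∧ t ≠ 0)),
        ξ (i + (t : ZMod n))

open Finset Matrix

section CycleSkewMatrix

variable {G R : Type*} [AddCommGroup G] [DecidableEq G] [Ring R]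

def cycleSkewMatrix (g : G) (w : G → R) : Matrix G G R :=
  Matrix.of fun p q => if q = p + g then w q else if p = q + g then -w p else 0

variable {g : G} (w : G → R)

theorem cycleSkewMatrix_transpose (hg : g + g ≠ 0) :
    (cycleSkewMatrix g w)ᵀ = -cycleSkewMatrix g w := by
  have hloop (x : G) : x ≠ x + g + g := fun h => hg (by simpa [add_assoc] using h.symm)
  ext p q
  simp only [cycleSkewMatrix, transpose_apply, of_apply]
  by_cases hq : q = p + g
  · subst hq
    simp [hloop p]
  · by_cases hp : p = q + g
    · subst hp
      simp [hloop q]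
    · simp [hq, hp]

theorem sq_cycleSkewMatrix_apply (hg : g + g ≠ 0) (i j : G) :
    cycleSkewMatrix g w i j ^ 2 =
      (if i = j - g then w j ^ 2 else 0) + (if i = j + g then w (j + g) ^ 2 else 0) := by
  have hne : j - g ≠ j + g := fun h => hg (by rw [show g + g = j + g - (j - g) by abel, h, sub_self])
  have hj : j = i + g ↔ i = j - g := by rw [eq_sub_iff_add_eq, eq_comm]
  simp only [cycleSkewMatrix, of_apply, hj]
  by_cases h₁ : i = j - g
  · simp [h₁, hne]
  · by_cases h₂ : i = j + g <;> simp [h₁, h₂, hne.symm]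

theorem sum_sq_cycleSkewMatrix [Fintype G] (hg : g + g ≠ 0) (j : G) :
    ∑ i, cycleSkewMatrix g w i j ^ 2 = w j ^ 2 + w (j + g) ^ 2 := by
  simp [sq_cycleSkewMatrix_apply w hg, sum_add_distrib]

end CycleSkewMatrix

theorem sum_filter_even_sub_sum_filter_odd (m : ℕ) (f : ℕ → ℝ) :
    ∑ t ∈ (range (m + 2)).filter (fun t => t = 1 ∨ (Even t ∧ t ≠ 0)), f t -
      ∑ t ∈ (range (m + 2)).filter (fun t => t = 0 ∨ (Odd t ∧ t ≠ 1)), f t =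
    ∑ t ∈ range (m + 2), (-1) ^ t * f t - 2 * f 0 + 2 * f 1 := by
  have hsign (t : ℕ) :
      ((if t = 1 ∨ (Even t ∧ t ≠ 0) then f t else 0) -
        if t = 0 ∨ (Odd t ∧ t ≠ 1) then f t else 0) =
      (-1) ^ t * f t + ((if t = 0 then -2 * f 0 else 0) + if t = 1 then 2 * f 1 else 0) := by
    rcases t with _ | _ | t
    · simp [two_mul]
    · simp [two_mul]
    · rcases Nat.even_or_odd t with ht | ht <;> simp [ht, parity_simps]
  simp only [sum_filter, ← sum_sub_distrib, hsign, sum_add_distrib, sum_ite_eq', mem_range,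
    show 0 < m + 2 by omega, show 1 < m + 2 by omega, if_true]
  ring

namespace ZMod

variable {n : ℕ}

def altSum (ξ : ZMod n → ℝ) (c : ZMod n) : ℝ :=
  ∑ t ∈ range n, (-1) ^ t * ξ (c + t)

theorem altSum_add_altSum_add_one (hn : Odd n) (ξ : ZMod n → ℝ) (c : ZMod n) :
    altSum ξ c + altSum ξ (c + 1) = 2 * ξ c := by
  have hshift (t : ℕ) : c + ((t : ZMod n) + 1) = c + 1 + t := by ring
  have h := (sum_range_succ (fun t => (-1 : ℝ) ^ t * ξ (c + t)) n).symm.trans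
    (sum_range_succ' _ n)
  simp only [pow_succ, natCast_self, Nat.cast_add, Nat.cast_one, hn.neg_one_pow, hshift,
    mul_neg_one, neg_mul, sum_neg_distrib, Nat.cast_zero, pow_zero, add_zero, one_mul] at h
  rw [altSum, altSum]
  linarith

theorem altSum_add_two (hn : Odd n) (ξ : ZMod n → ℝ) (c : ZMod n) :
    altSum ξ (c + 2) = altSum ξ c - 2 * ξ c + 2 * ξ (c + 1) := by
  have h₀ := altSum_add_altSum_add_one hn ξ c
  have h₁ := altSum_add_altSum_add_one hn ξ (c + 1)
  rw [add_assoc, one_add_one_eq_two] at h₁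
  linarith

end ZMod

theorem CycIneq.one_lt {n : ℕ} [NeZero n] {ξ : ZMod n → ℝ} (h : CycIneq n ξ)
    (hpos : ∀ i, 0 < ξ i) : 1 < n := by
  by_contra! hn
  obtain rfl : n = 1 := le_antisymm hn (NeZero.one_le)
  exact (hpos 0).not_ge (by simpa [range_one, filter_singleton] using h 0)

theorem CycIneq.altSum_nonneg {n : ℕ} {ξ : ZMod n → ℝ} (h : CycIneq n ξ) (hn : Odd n)
    (hn1 : 1 < n) (c : ZMod n) : 0 ≤ ZMod.altSum ξ c := by
  obtain ⟨m, rfl⟩ : ∃ m, n = m + 2 := ⟨n - 2, by obtain ⟨k, rfl⟩ := hn; omega⟩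
  have hdiff := sum_filter_even_sub_sum_filter_odd m (fun t => ξ (c - 2 + t))
  simp only [Nat.cast_zero, add_zero, Nat.cast_one] at hdiff
  rw [← sub_add_cancel c 2, ZMod.altSum_add_two hn]
  rw [ZMod.altSum]
  linarith [h (c - 2)]

/-- for odd `n` and positive `ξ_1, …, ξ_n` satisfying the cyclic
inequalities, there is a real skew-symmetric `n × n` matrix `A` whose columns
have squared-norm column sums `∑ i, (a_i^j)² = ξ_j`. -/
theorem exists_skew_symmetric_with_column_square_sums
    (n : ℕ) [NeZero n] (hn : Odd n) (ξ : ZMod n → ℝ)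
    (hpos : ∀ i, 0 < ξ i) (hineq : CycIneq n ξ) :
    ∃ A : Matrix (ZMod n) (ZMod n) ℝ, A.transpose = -A ∧
      ∀ j : ZMod n, ∑ i : ZMod n, (A i j) ^ 2 = ξ j := by
  have hn1 := hineq.one_lt hpos
  have : Nontrivial (ZMod n) := ZMod.nontrivial_iff.mpr hn1.ne'
  have h2 : (1 : ZMod n) + 1 ≠ 0 := (ZMod.add_self_eq_zero_iff_eq_zero hn).not.mpr one_ne_zero
  let w : ZMod n → ℝ := fun j => √(ZMod.altSum ξ j / 2)
  have hw (j : ZMod n) : w j ^ 2 = ZMod.altSum ξ j / 2 :=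
    Real.sq_sqrt (by linarith [hineq.altSum_nonneg hn hn1 j])
  refine ⟨cycleSkewMatrix 1 w, cycleSkewMatrix_transpose w h2, fun j => ?_⟩
  rw [sum_sq_cycleSkewMatrix w h2, hw, hw]
  linarith [ZMod.altSum_add_altSum_add_one hn ξ j]
end

section
/- For n = 3 and positive reals ξ_1, ξ_2, ξ_3 satisfying the triangle inequalities ξ_1 ≤ ξ_2 + ξ_3, ξ_2 ≤ ξ_3 + ξ_1, ξ_3 ≤ ξ_1 + ξ_2, there exists a real skew-symmetric 3×3 matrix A with ∑_{i=1}^3 (a_i^j)² = ξ_j for j = 1, 2, 3. -/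
/-- for positive reals `ξ₁, ξ₂, ξ₃` satisfying the triangle
inequalities, there is a real skew-symmetric `3 × 3` matrix `A` with
`∑ i, (a_i^j)² = ξ_j` for `j = 1, 2, 3`. -/
theorem exists_skew_symmetric_three_by_three
    (ξ : Fin 3 → ℝ) (hpos : ∀ j, 0 < ξ j)
    (h1 : ξ 0 ≤ ξ 1 + ξ 2) (h2 : ξ 1 ≤ ξ 2 + ξ 0) (h3 : ξ 2 ≤ ξ 0 + ξ 1) :
    ∃ A : Matrix (Fin 3) (Fin 3) ℝ, A.transpose = -A ∧
      ∀ j : Fin 3, ∑ i : Fin 3, (A i j) ^ 2 = ξ j := by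
  set x := Real.sqrt ((ξ 0 + ξ 1 - ξ 2) / 2) with hx
  set y := Real.sqrt ((ξ 0 + ξ 2 - ξ 1) / 2) with hy
  set z := Real.sqrt ((ξ 1 + ξ 2 - ξ 0) / 2) with hz
  have hx2 : x ^ 2 = (ξ 0 + ξ 1 - ξ 2) / 2 := Real.sq_sqrt (by linarith)
  have hy2 : y ^ 2 = (ξ 0 + ξ 2 - ξ 1) / 2 := Real.sq_sqrt (by linarith)
  have hz2 : z ^ 2 = (ξ 1 + ξ 2 - ξ 0) / 2 := Real.sq_sqrt (by linarith)
  refine ⟨!![0, x, y; -x, 0, z; -y, -z, 0], ?_, ?_⟩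
  · ext i j
    fin_cases i <;> fin_cases j <;> simp [Matrix.transpose]
  · intro j
    fin_cases j <;> simp [Fin.sum_univ_three] <;> nlinarith [hx2, hy2, hz2]
end

section
/- For odd n > 1, the bistochastic matrix J_n with all entries equal to 1/n is (n−1)-orthostochastic. -/
open scoped RealInnerProductSpace

/-!
Realise `J_n` by the discrete Fourier transform: with `ψ` a primitive additive character of `ZMod n`,
the complex numbers `ψ (j * i) / √n` have squared modulus `1 / n`, and character orthogonality
`∑ i, conj (ψ (j * i)) * ψ (k * i) = n δ_{jk}` gives the isometry condition once `ℂ` is viewed as the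
real inner product space `ℝ²`. A linear isometry `ℂ → ℝ^{n-1}`, which exists because `n - 1 ≥ 2`,
carries this realisation into `ℝ^{n-1}`.
-/

open Finset

/-- The paper's matrix `V` of vectors witnessing that `B` is `(finrank ℝ E)`-orthostochastic:
the columns `v j` are orthonormal in `ι → E`. -/
def IsOrthostochasticWitness {ι E : Type*} [Fintype ι] [DecidableEq ι]
    [NormedAddCommGroup E] [InnerProductSpace ℝ E] (v : ι → ι → E) (B : Matrix ι ι ℝ) : Prop :=
  (∀ j k, ∑ i, ⟪v j i, v k i⟫ = if j = k then 1 else 0) ∧ ∀ i j, ‖v i j‖ ^ 2 = B i j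

namespace IsOrthostochasticWitness

variable {ι κ E F : Type*} [Fintype ι] [DecidableEq ι] [Fintype κ] [DecidableEq κ]
  [NormedAddCommGroup E] [InnerProductSpace ℝ E] [NormedAddCommGroup F] [InnerProductSpace ℝ F]
  {v : ι → ι → E} {B : Matrix ι ι ℝ}

theorem map (h : IsOrthostochasticWitness v B) (L : E →ₗᵢ[ℝ] F) :
    IsOrthostochasticWitness (fun j i => L (v j i)) B :=
  ⟨fun j k => by simpa only [LinearIsometry.inner_map_map] using h.1 j k,
    fun i j => by simpa only [LinearIsometry.norm_map] using h.2 i j⟩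

theorem reindex (h : IsOrthostochasticWitness v B) (e : κ ≃ ι) :
    IsOrthostochasticWitness (fun j i => v (e j) (e i)) (B.submatrix e e) :=
  ⟨fun j k => by
    simpa only [e.injective.eq_iff] using
      (e.sum_comp fun i => ⟪v (e j) i, v (e k) i⟫).trans (h.1 (e j) (e k)),
    fun i j => h.2 (e i) (e j)⟩

end IsOrthostochasticWitness

theorem exists_linearIsometry_euclideanSpace_of_finrank_le {𝕜 E : Type*} [RCLike 𝕜]
    [NormedAddCommGroup E] [InnerProductSpace 𝕜 E] [FiniteDimensional 𝕜 E] {d : ℕ}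
    (h : Module.finrank 𝕜 E ≤ d) : Nonempty (E →ₗᵢ[𝕜] EuclideanSpace 𝕜 (Fin d)) := by
  let b := stdOrthonormalBasis 𝕜 E
  let f := b.toBasis.constr 𝕜 fun i => EuclideanSpace.single (Fin.castLE h i) (1 : 𝕜)
  have hf : Orthonormal 𝕜 (f ∘ b.toBasis) := by
    convert EuclideanSpace.orthonormal_single.comp _ (Fin.castLE_injective h)
    ext1 i
    simp [f]
  exact ⟨f.isometryOfOrthonormal b.orthonormal hf⟩

theorem AddChar.sum_inner_apply_mul_apply_mul {R : Type*} [CommRing R] [Fintype R] [DecidableEq R]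
    {ψ : AddChar R ℂ} (hψ : ψ.IsPrimitive) (a b : R) :
    ∑ x, ⟪ψ (a * x), ψ (b * x)⟫ = if a = b then (Fintype.card R : ℝ) else 0 := by
  have h (x : R) : ⟪ψ (a * x), ψ (b * x)⟫ = (ψ (x * (b - a))).re := by
    rw [Complex.inner, ← ψ.map_neg_eq_conj, ← AddChar.map_add_eq_mul]
    ring_nf
  simp_rw [h, ← Complex.re_sum, AddChar.sum_mulShift _ hψ, sub_eq_zero, eq_comm (a := b)]
  split_ifs <;> simp

theorem AddChar.isOrthostochasticWitness {R : Type*} [CommRing R] [Fintype R] [DecidableEq R]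
    {ψ : AddChar R ℂ} (hψ : ψ.IsPrimitive) :
    IsOrthostochasticWitness (fun a x => (√(Fintype.card R))⁻¹ • ψ (a * x))
      (fun _ _ => 1 / Fintype.card R) := by
  have hcard : (0 : ℝ) < Fintype.card R := by exact_mod_cast Fintype.card_pos
  have hscale : (√(Fintype.card R))⁻¹ ^ 2 = 1 / (Fintype.card R : ℝ) := by
    rw [inv_pow, Real.sq_sqrt hcard.le, one_div]
  refine ⟨fun a b => ?_, fun a x => ?_⟩
  · simp_rw [real_inner_smul_left, real_inner_smul_right, ← mul_sum,
      AddChar.sum_inner_apply_mul_apply_mul hψ, ← mul_assoc, ← sq, hscale]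
    split_ifs <;> simp [hcard.ne']
  · rw [norm_smul, ψ.norm_apply, mul_one, Real.norm_eq_abs, sq_abs, hscale]

/-- for odd `n > 1`, the van der Waerden matrix `J_n` with all
entries equal to `1/n` is `(n−1)`-orthostochastic: there is an `n × n` matrix
of vectors in `ℝ^{n−1}` defining an isometry `ℝⁿ → ℝ^{n(n−1)}` all of whose
entries have squared norm `1/n`. -/
theorem uniform_matrix_is_orthostochastic (n : ℕ) (hn : Odd n) (hn1 : 1 < n) :
    ∃ v : Fin n → Fin n → EuclideanSpace ℝ (Fin (n - 1)),
      (∀ j k : Fin n, ∑ i : Fin n, ⟪v j i, v k i⟫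
          = if j = k then 1 else 0) ∧
      (∀ i j : Fin n, ‖v i j‖ ^ 2 = 1 / n) := by
  have : NeZero n := ⟨by omega⟩
  have hdim : Module.finrank ℝ ℂ ≤ n - 1 := by
    obtain ⟨m, rfl⟩ := hn
    rw [Complex.finrank_real_complex]
    omega
  obtain ⟨L⟩ := exists_linearIsometry_euclideanSpace_of_finrank_le hdim
  have hwit := (AddChar.isOrthostochasticWitness (ZMod.isPrimitive_stdAddChar n)).reindex
    (ZMod.finEquiv n).toEquiv |>.map L
  rw [ZMod.card] at hwit
  exact ⟨_, hwit⟩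
end
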